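/- arXiv:0710.1520 — 3 statements merged into one kernel-verified Lean document; each statement's English description precedes it below -/
import Mathlib

section
/- In the two-color urn model with reducible replacement matrix R = [[s, 1-s],[0,1]] where 0 < s < 1, the martingale V_n = W_n / Π_n(s) is L²-bounded: sup_n E[V_n²] < ∞. -/
open MeasureTheory Filter

/-!
Write `a_n = s / (n + 1)`, `m_n = E[W_n]` and `q_n = E[W_n^2]`. Conditioning on `ℱ_n` gives
`m_{n+1} = (1 + a_n) m_n`, so `m_n = m_0 Π_n(s)`, and, since `χ^2 = χ`,
`q_{n+1} = (1 + 2 a_n) q_n + s a_n m_n`. Hence `Q_n = q_n / Π_n(s)^2 + s m_0 / Π_n(s)` satisfies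
`Q_{n+1} = Q_n (1 + 2 a_n) / (1 + a_n)^2 ≤ Q_n`, and `E[V_n^2] ≤ Q_n ≤ q_0 + s m_0`.
-/

/-- `Π_n(s)` -/
noncomputable def urnProd (s : ℝ) (n : ℕ) : ℝ := ∏ j ∈ Finset.range n, (1 + s / (j + 1))

section urnProd

variable {s : ℝ}

@[simp]
theorem urnProd_zero : urnProd s 0 = 1 := by simp [urnProd]

theorem urnProd_succ (n : ℕ) : urnProd s (n + 1) = urnProd s n * (1 + s / (n + 1)) :=
  Finset.prod_range_succ _ n

theorem urnProd_pos (hs : 0 ≤ s) (n : ℕ) : 0 < urnProd s n :=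
  Finset.prod_pos fun _ _ => by positivity

theorem antitone_div_urnProd_sq_add (hs : 0 ≤ s) {c : ℝ} (hc : 0 ≤ c) {q : ℕ → ℝ}
    (hq_nonneg : ∀ n, 0 ≤ q n)
    (hq : ∀ n : ℕ, q (n + 1) = q n * (1 + 2 * s / (n + 1)) + s ^ 2 * (c * urnProd s n) / (n + 1)) :
    Antitone fun n => q n / urnProd s n ^ 2 + s * c / urnProd s n := by
  refine antitone_nat_of_succ_le fun n => ?_
  have hP := urnProd_pos hs n
  set a := s / ((n : ℝ) + 1) with ha_def
  have ha : 0 ≤ a := by positivity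
  have hstep : q (n + 1) / urnProd s (n + 1) ^ 2 + s * c / urnProd s (n + 1) =
      (q n / urnProd s n ^ 2 + s * c / urnProd s n) * ((1 + 2 * a) / (1 + a) ^ 2) := by
    rw [hq, urnProd_succ, ha_def]
    field_simp
    ring
  rw [hstep]
  have hQ : 0 ≤ q n / urnProd s n ^ 2 + s * c / urnProd s n :=
    add_nonneg (div_nonneg (hq_nonneg n) (by positivity)) (by positivity)
  refine mul_le_of_le_one_right hQ ((div_le_one (pow_pos (by linarith) 2)).2 ?_)
  nlinarith [sq_nonneg a]

end urnProd

theorem integral_mul_eq_integral_mul_condExp {Ω : Type*} {m m0 : MeasurableSpace Ω}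
    {μ : Measure Ω} [IsFiniteMeasure μ] (hm : m ≤ m0) {f g : Ω → ℝ}
    (hf : StronglyMeasurable[m] f) (hg : Integrable g μ) (c : ℝ) (hfc : ∀ ω, ‖f ω‖ ≤ c) :
    ∫ ω, f ω * g ω ∂μ = ∫ ω, f ω * μ[g|m] ω ∂μ := by
  rw [← integral_condExp hm]
  exact integral_congr_ae
    (condExp_stronglyMeasurable_mul_of_bound hm hf hg c (.of_forall hfc))

/-- The urn with replacement matrix `[[s, 1 - s], [0, 1]]`: `W n` is the white mass after `n`
draws and `χ (n + 1)` the indicator that draw `n + 1` is white. -/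
structure IsUrnProcess {Ω : Type*} {m0 : MeasurableSpace Ω} (μ : Measure Ω)
    (ℱ : Filtration ℕ m0) (W χ : ℕ → Ω → ℝ) (s : ℝ) : Prop where
  pos : 0 < s
  init : ∀ ω, 0 ≤ W 0 ω ∧ W 0 ω ≤ 1
  draw_eq : ∀ n ω, χ (n + 1) ω = 0 ∨ χ (n + 1) ω = 1
  adapted : Adapted ℱ W
  succ_eq : ∀ n ω, W (n + 1) ω = W n ω + s * χ (n + 1) ω
  condExp_draw : ∀ n, μ[χ (n + 1) | ℱ n] =ᵐ[μ] fun ω => W n ω / (n + 1)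

namespace IsUrnProcess

variable {Ω : Type*} {m0 : MeasurableSpace Ω} {μ : Measure Ω} {ℱ : Filtration ℕ m0}
  {W χ : ℕ → Ω → ℝ} {s : ℝ}

theorem draw_nonneg (h : IsUrnProcess μ ℱ W χ s) (n : ℕ) (ω : Ω) : 0 ≤ χ (n + 1) ω := by
  rcases h.draw_eq n ω with h0 | h1 <;> simp [*]

theorem draw_le_one (h : IsUrnProcess μ ℱ W χ s) (n : ℕ) (ω : Ω) : χ (n + 1) ω ≤ 1 := by
  rcases h.draw_eq n ω with h0 | h1 <;> simp [*]

theorem draw_sq (h : IsUrnProcess μ ℱ W χ s) (n : ℕ) (ω : Ω) : χ (n + 1) ω ^ 2 = χ (n + 1) ω := by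
  rcases h.draw_eq n ω with h0 | h1 <;> simp [*]

theorem nonneg (h : IsUrnProcess μ ℱ W χ s) (n : ℕ) (ω : Ω) : 0 ≤ W n ω := by
  induction n with
  | zero => exact (h.init ω).1
  | succ n ih => rw [h.succ_eq]; nlinarith [h.draw_nonneg n ω, h.pos]

theorem le_one_add_mul (h : IsUrnProcess μ ℱ W χ s) (n : ℕ) (ω : Ω) : W n ω ≤ 1 + s * n := by
  induction n with
  | zero => simpa using (h.init ω).2
  | succ n ih => rw [h.succ_eq]; push_cast; nlinarith [h.draw_le_one n ω, h.pos]

theorem norm_le (h : IsUrnProcess μ ℱ W χ s) (n : ℕ) (ω : Ω) : ‖W n ω‖ ≤ 1 + s * n := by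
  rw [Real.norm_of_nonneg (h.nonneg n ω)]
  exact h.le_one_add_mul n ω

theorem measurable_draw (h : IsUrnProcess μ ℱ W χ s) (n : ℕ) :
    Measurable[ℱ (n + 1)] (χ (n + 1)) := by
  have hχ : χ (n + 1) = fun ω => (W (n + 1) ω - W n ω) / s := by
    ext ω
    rw [h.succ_eq]
    field_simp [h.pos.ne']
    ring
  have hW : Measurable[ℱ (n + 1)] (W n) := (h.adapted n).mono (ℱ.mono n.le_succ) le_rfl
  rw [hχ]
  exact ((h.adapted (n + 1)).sub hW).div_const s

theorem integrable (h : IsUrnProcess μ ℱ W χ s) [IsFiniteMeasure μ] (n : ℕ) :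
    Integrable (W n) μ :=
  .of_bound ((h.adapted n).mono (ℱ.le n) le_rfl).aestronglyMeasurable _ (.of_forall (h.norm_le n))

theorem integrable_draw (h : IsUrnProcess μ ℱ W χ s) [IsFiniteMeasure μ] (n : ℕ) :
    Integrable (χ (n + 1)) μ :=
  .of_bound ((h.measurable_draw n).mono (ℱ.le _) le_rfl).aestronglyMeasurable 1
    (.of_forall fun ω => by
      rw [Real.norm_of_nonneg (h.draw_nonneg n ω)]; exact h.draw_le_one n ω)

theorem integral_mul_draw (h : IsUrnProcess μ ℱ W χ s) [IsFiniteMeasure μ] {n : ℕ}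
    {f : Ω → ℝ} (hf : StronglyMeasurable[ℱ n] f) (c : ℝ) (hfc : ∀ ω, ‖f ω‖ ≤ c) :
    ∫ ω, f ω * χ (n + 1) ω ∂μ = (∫ ω, f ω * W n ω ∂μ) / (n + 1) := by
  rw [integral_mul_eq_integral_mul_condExp (ℱ.le n) hf (h.integrable_draw n) c hfc,
    ← integral_div]
  refine integral_congr_ae ?_
  filter_upwards [h.condExp_draw n] with ω hω
  rw [hω, mul_div_assoc]

theorem integral_draw (h : IsUrnProcess μ ℱ W χ s) [IsFiniteMeasure μ] (n : ℕ) :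
    ∫ ω, χ (n + 1) ω ∂μ = (∫ ω, W n ω ∂μ) / (n + 1) := by
  simpa using h.integral_mul_draw (f := fun _ => 1) stronglyMeasurable_const 1 (by simp)

theorem integral_succ (h : IsUrnProcess μ ℱ W χ s) [IsFiniteMeasure μ] (n : ℕ) :
    ∫ ω, W (n + 1) ω ∂μ = (∫ ω, W n ω ∂μ) * (1 + s / (n + 1)) := by
  simp_rw [h.succ_eq n]
  rw [integral_add (h.integrable n) ((h.integrable_draw n).const_mul s), integral_const_mul,
    h.integral_draw]
  ring

theorem integral_eq (h : IsUrnProcess μ ℱ W χ s) [IsFiniteMeasure μ] (n : ℕ) :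
    ∫ ω, W n ω ∂μ = (∫ ω, W 0 ω ∂μ) * urnProd s n := by
  induction n with
  | zero => simp
  | succ n ih => rw [h.integral_succ, ih, urnProd_succ, mul_assoc]

theorem integral_sq_succ (h : IsUrnProcess μ ℱ W χ s) [IsFiniteMeasure μ] (n : ℕ) :
    ∫ ω, W (n + 1) ω ^ 2 ∂μ =
      (∫ ω, W n ω ^ 2 ∂μ) * (1 + 2 * s / (n + 1)) + s ^ 2 * (∫ ω, W n ω ∂μ) / (n + 1) := by
  have hexpand : ∀ ω, W (n + 1) ω ^ 2 =
      W n ω ^ 2 + 2 * s * (W n ω * χ (n + 1) ω) + s ^ 2 * χ (n + 1) ω := by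
    intro ω
    rw [h.succ_eq]
    linear_combination s ^ 2 * h.draw_sq n ω
  have hW := h.integrable n
  have hWχ : Integrable (fun ω => W n ω * χ (n + 1) ω) μ :=
    (h.integrable_draw n).bdd_mul hW.aestronglyMeasurable (.of_forall (h.norm_le n))
  have hW2 : Integrable (fun ω => W n ω ^ 2) μ := by
    simpa only [sq] using hW.bdd_mul hW.aestronglyMeasurable (.of_forall (h.norm_le n))
  have hWW : ∫ ω, W n ω * W n ω ∂μ = ∫ ω, W n ω ^ 2 ∂μ := by simp only [sq]
  simp_rw [hexpand]
  rw [integral_add (f := fun ω => W n ω ^ 2 + 2 * s * (W n ω * χ (n + 1) ω))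
      (hW2.add (hWχ.const_mul _)) ((h.integrable_draw n).const_mul _),
    integral_add hW2 (hWχ.const_mul _), integral_const_mul, integral_const_mul, h.integral_draw,
    h.integral_mul_draw (h.adapted n).stronglyMeasurable _ (h.norm_le n), hWW]
  ring

end IsUrnProcess

theorem stmt_3_general {Ω : Type*} {m0 : MeasurableSpace Ω} (μ : Measure Ω) [IsProbabilityMeasure μ]
    (ℱ : Filtration ℕ m0) (W χ : ℕ → Ω → ℝ) (s : ℝ) (hs0 : 0 < s)
    (hW0 : ∀ ω, 0 ≤ W 0 ω ∧ W 0 ω ≤ 1)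
    (hχ01 : ∀ n ω, χ (n + 1) ω = 0 ∨ χ (n + 1) ω = 1)
    (hadapted : Adapted ℱ W)
    (hevol : ∀ n ω, W (n + 1) ω = W n ω + s * χ (n + 1) ω)
    (hdraw : ∀ n, μ[χ (n + 1) | ℱ n] =ᵐ[μ] fun ω => W n ω / (n + 1)) :
    ∃ B : ℝ, ∀ n, ∫ ω, (W n ω / ∏ j ∈ Finset.range n, (1 + s / (j + 1))) ^ 2 ∂μ ≤ B := by
  have h : IsUrnProcess μ ℱ W χ s := ⟨hs0, hW0, hχ01, hadapted, hevol, hdraw⟩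
  have hm0 : 0 ≤ ∫ ω, W 0 ω ∂μ := integral_nonneg fun ω => (hW0 ω).1
  have hbound := antitone_div_urnProd_sq_add hs0.le hm0
    (fun n => integral_nonneg fun ω => sq_nonneg (W n ω))
    (fun n => by rw [h.integral_sq_succ, h.integral_eq])
  refine ⟨∫ ω, W 0 ω ^ 2 ∂μ + s * ∫ ω, W 0 ω ∂μ, fun n => ?_⟩
  calc ∫ ω, (W n ω / urnProd s n) ^ 2 ∂μ
      = (∫ ω, W n ω ^ 2 ∂μ) / urnProd s n ^ 2 := by simp_rw [div_pow]; exact integral_div _ _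
    _ ≤ (∫ ω, W n ω ^ 2 ∂μ) / urnProd s n ^ 2 + s * (∫ ω, W 0 ω ∂μ) / urnProd s n :=
        le_add_of_nonneg_right (by have := urnProd_pos hs0.le n; positivity)
    _ ≤ _ := by simpa using hbound (Nat.zero_le n)

/-- In the two-color urn with replacement matrix `[[s, 1-s],[0,1]]`, `0 < s < 1`,
the process `V_n = W_n / Π_n(s)`, with `Π_n(s) = ∏_{j=0}^{n-1}(1 + s/(j+1))`,
is a martingale. Here `χ_{n+1}` is the indicator of drawing a white ball at trial `n+1`,
with conditional probability `W_n/(n+1)`, and `W_{n+1} = W_n + s χ_{n+1}`. -/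
theorem stmt_3 {Ω : Type*} {m0 : MeasurableSpace Ω} (μ : Measure Ω) [IsProbabilityMeasure μ]
    (ℱ : Filtration ℕ m0) (W χ : ℕ → Ω → ℝ) (s : ℝ) (hs0 : 0 < s) (hs1 : s < 1)
    (hW0 : ∀ ω, 0 ≤ W 0 ω ∧ W 0 ω ≤ 1)
    (hχ01 : ∀ n ω, χ (n + 1) ω = 0 ∨ χ (n + 1) ω = 1)
    (hχmeas : ∀ n, Measurable[ℱ (n + 1)] (χ (n + 1)))
    (hadapted : Adapted ℱ W)
    (hevol : ∀ n ω, W (n + 1) ω = W n ω + s * χ (n + 1) ω)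
    (hdraw : ∀ n, μ[χ (n + 1) | ℱ n] =ᵐ[μ] fun ω => W n ω / (n + 1)) :
    ∃ B : ℝ, ∀ n, ∫ ω, (W n ω / ∏ j ∈ Finset.range n, (1 + s / (j + 1))) ^ 2 ∂μ ≤ B :=
  stmt_3_general μ ℱ W χ s hs0 hW0 hχ01 hadapted hevol hdraw
end

section
/- Let 0 < a < 1 and suppose b_j ~ σ²/j as j → ∞ with σ² > 0. Then Σ_{j=1}^n b_j ∏_{i=j+1}^n (1 - a/i)² converges to σ²/(2a) as n → ∞. -/
/-!
Write `S n` for the sum and `c n = 1 - (1 - a/(n+1))²`. Splitting off the term `j = n + 1` gives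
`S (n+1) = (1 - c n) S n + b (n+1)`, a convex combination of `S n` and `b (n+1) / c n`.
Since `c n ~ 2a/n` and `b n ~ σ²/n`, the second point tends to `σ²/(2a)`, and because `Σ c n = ∞`
the weight `∏ (1 - c i)` left on any initial value dies out, so `S n → σ²/(2a)`.
-/

open Filter Finset Topology

lemma prod_one_sub_le_exp_neg_sum {ι : Type*} (s : Finset ι) {c : ι → ℝ} (hc : ∀ i ∈ s, c i ≤ 1) :
    ∏ i ∈ s, (1 - c i) ≤ Real.exp (-∑ i ∈ s, c i) := by
  rw [← sum_neg_distrib, Real.exp_sum]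
  exact prod_le_prod (fun i hi => sub_nonneg.2 (hc i hi)) fun i _ => by
    linarith [Real.add_one_le_exp (-c i)]

lemma tendsto_prod_Ico_one_sub_nhds_zero {c : ℕ → ℝ} (hc : ∀ n, c n ≤ 1)
    (hsum : Tendsto (fun n => ∑ i ∈ range n, c i) atTop atTop) (N : ℕ) :
    Tendsto (fun n => ∏ i ∈ Ico N n, (1 - c i)) atTop (𝓝 0) := by
  have hsum_Ico : Tendsto (fun n => ∑ i ∈ Ico N n, c i) atTop atTop := by
    refine (tendsto_atTop_add_const_right _ (-∑ i ∈ range N, c i) hsum).congr' ?_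
    filter_upwards [eventually_ge_atTop N] with n hn
    rw [sum_Ico_eq_sub _ hn, sub_eq_add_neg]
  refine squeeze_zero (fun n => prod_nonneg fun i _ => sub_nonneg.2 (hc i))
    (fun n => prod_one_sub_le_exp_neg_sum _ fun i _ => hc i) ?_
  exact Real.tendsto_exp_atBot.comp (tendsto_neg_atTop_atBot.comp hsum_Ico)

section ConvexRecurrence

variable {E : Type*} [NormedAddCommGroup E] [NormedSpace ℝ E] {c : ℕ → ℝ} {x y : ℕ → E} {L : E}

lemma norm_sub_le_of_convex_recurrence (hc0 : ∀ n, 0 ≤ c n) (hc1 : ∀ n, c n ≤ 1)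
    (hx : ∀ n, x (n + 1) = (1 - c n) • x n + c n • y n) {ε : ℝ} {N : ℕ}
    (hy : ∀ n ≥ N, ‖y n - L‖ ≤ ε) :
    ∀ n ≥ N, ‖x n - L‖ - ε ≤ (∏ i ∈ Ico N n, (1 - c i)) * (‖x N - L‖ - ε) := by
  intro n hn
  induction n, hn using Nat.le_induction with
  | base => simp
  | succ n hn ih =>
    have hsplit : x (n + 1) - L = (1 - c n) • (x n - L) + c n • (y n - L) := by
      rw [hx, smul_sub, smul_sub, ← add_sub_add_comm, ← add_smul, sub_add_cancel, one_smul]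
    have hstep : ‖x (n + 1) - L‖ ≤ (1 - c n) * ‖x n - L‖ + c n * ε := by
      calc ‖x (n + 1) - L‖ ≤ ‖(1 - c n) • (x n - L)‖ + ‖c n • (y n - L)‖ :=
            hsplit ▸ norm_add_le _ _
        _ = (1 - c n) * ‖x n - L‖ + c n * ‖y n - L‖ := by
          rw [norm_smul, norm_smul, Real.norm_of_nonneg (sub_nonneg.2 (hc1 n)),
            Real.norm_of_nonneg (hc0 n)]
        _ ≤ (1 - c n) * ‖x n - L‖ + c n * ε := by gcongr; exacts [hc0 n, hy n hn]
    rw [prod_Ico_succ_top hn]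
    linarith [mul_le_mul_of_nonneg_left ih (sub_nonneg.2 (hc1 n))]

theorem tendsto_of_convex_recurrence (hc0 : ∀ n, 0 ≤ c n) (hc1 : ∀ n, c n ≤ 1)
    (hsum : Tendsto (fun n => ∑ i ∈ range n, c i) atTop atTop)
    (hx : ∀ n, x (n + 1) = (1 - c n) • x n + c n • y n) (hy : Tendsto y atTop (𝓝 L)) :
    Tendsto x atTop (𝓝 L) := by
  rw [Metric.tendsto_atTop] at hy ⊢
  intro ε hε
  obtain ⟨N, hN⟩ := hy (ε / 2) (half_pos hε)
  have hbound := norm_sub_le_of_convex_recurrence hc0 hc1 hx fun n hn =>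
    (dist_eq_norm (y n) L ▸ hN n hn).le
  have hP := (tendsto_prod_Ico_one_sub_nhds_zero hc1 hsum N).mul_const (‖x N - L‖ - ε / 2)
  rw [zero_mul] at hP
  obtain ⟨M, hM⟩ := eventually_atTop.1 (hP.eventually_lt_const (half_pos hε))
  refine ⟨max N M, fun n hn => ?_⟩
  rw [dist_eq_norm]
  linarith [hbound n (le_of_max_le_left hn), hM n (le_of_max_le_right hn)]

end ConvexRecurrence

lemma sum_Icc_mul_prod_Icc_succ {R : Type*} [CommSemiring R] (b r : ℕ → R) {m n : ℕ}
    (hmn : m ≤ n + 1) :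
    ∑ j ∈ Icc m (n + 1), b j * ∏ i ∈ Icc (j + 1) (n + 1), r i
      = r (n + 1) * ∑ j ∈ Icc m n, b j * ∏ i ∈ Icc (j + 1) n, r i + b (n + 1) := by
  rw [sum_Icc_succ_top hmn, Icc_eq_empty_of_lt (Nat.lt_succ_self _), prod_empty, mul_one, mul_sum]
  congr 1
  refine sum_congr rfl fun j hj => ?_
  rw [prod_Icc_succ_top (by grind)]
  ring

lemma le_one_sub_one_sub_sq {t : ℝ} (ht0 : 0 ≤ t) (ht1 : t ≤ 1) : t ≤ 1 - (1 - t) ^ 2 := by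
  nlinarith

lemma tendsto_one_sub_one_sub_div_sq_mul (a : ℝ) :
    Tendsto (fun n : ℕ => (1 - (1 - a / (n + 1 : ℕ)) ^ 2) * (n + 1 : ℕ)) atTop (𝓝 (2 * a)) := by
  have h : Tendsto (fun n : ℕ => 2 * a - a ^ 2 * (1 / (n + 1 : ℕ))) atTop (𝓝 (2 * a)) := by
    simpa using tendsto_const_nhds.sub
      (((tendsto_add_atTop_iff_nat 1).2 tendsto_one_div_atTop_nhds_zero_nat).const_mul (a ^ 2))
  refine h.congr fun n => ?_
  field_simp
  ring

lemma tendsto_sum_range_div_nat_succ_atTop {a : ℝ} (ha : 0 < a) :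
    Tendsto (fun n => ∑ i ∈ range n, a / (i + 1 : ℕ)) atTop atTop := by
  simpa [mul_sum, div_eq_mul_one_div a] using
    Real.tendsto_sum_range_one_div_nat_succ_atTop.const_mul_atTop ha

theorem stmt_8_general (a σ2 : ℝ) (ha0 : 0 < a) (ha1 : a < 1)
    (b : ℕ → ℝ) (hb : Tendsto (fun j : ℕ => b j * j) atTop (nhds σ2)) :
    Tendsto
      (fun n : ℕ => ∑ j ∈ Finset.Icc 1 n, b j * (∏ i ∈ Finset.Icc (j + 1) n, (1 - a / i)) ^ 2)
      atTop (nhds (σ2 / (2 * a))) := by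
  set c : ℕ → ℝ := fun n => 1 - (1 - a / (n + 1 : ℕ)) ^ 2
  have hc_ge : ∀ n, a / (n + 1 : ℕ) ≤ c n := fun n =>
    le_one_sub_one_sub_sq (by positivity) ((div_le_one (by positivity)).2 (by push_cast; linarith))
  have hc_pos : ∀ n, 0 < c n := fun n => (by positivity : 0 < a / (n + 1 : ℕ)).trans_le (hc_ge n)
  have hy : Tendsto (fun n => b (n + 1) / c n) atTop (𝓝 (σ2 / (2 * a))) := by
    refine (((tendsto_add_atTop_iff_nat 1).2 hb).div (tendsto_one_sub_one_sub_div_sq_mul a)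
      (by positivity)).congr fun n => ?_
    exact mul_div_mul_right _ _ (by positivity)
  simp_rw [← prod_pow]
  refine tendsto_of_convex_recurrence (fun n => (hc_pos n).le)
    (fun n => sub_le_self _ (sq_nonneg _))
    (tendsto_atTop_mono (fun n => sum_le_sum fun i _ => hc_ge i)
      (tendsto_sum_range_div_nat_succ_atTop ha0)) (fun n => ?_) hy
  rw [sum_Icc_mul_prod_Icc_succ _ _ (by omega), smul_eq_mul, smul_eq_mul,
    mul_div_cancel₀ _ (hc_pos n).ne']
  simp [c]

/-- If `0 < a < 1` and `b_j ~ σ²/j` with `σ² > 0`, then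
`Σ_{j=1}^n b_j ∏_{i=j+1}^n (1 - a/i)² → σ²/(2a)`. -/
theorem stmt_8 (a σ2 : ℝ) (ha0 : 0 < a) (ha1 : a < 1) (hσ : 0 < σ2)
    (b : ℕ → ℝ) (hb : Tendsto (fun j : ℕ => b j * j) atTop (nhds σ2)) :
    Tendsto
      (fun n : ℕ => ∑ j ∈ Finset.Icc 1 n, b j * (∏ i ∈ Finset.Icc (j + 1) n, (1 - a / i)) ^ 2)
      atTop (nhds (σ2 / (2 * a))) :=
  stmt_8_general a σ2 ha0 ha1 b hb
end

section
/- Let R be the 3×3 matrix [[s, (1-s)p],[0, P]] as in (3) with 0 < s < 1, P a 2×2 irreducible stochastic matrix with non-principal eigenvalue λ, and eigenvector ξ of P for λ. If λ = s, then R is diagonalizable if and only if pξ = 0, and in that case p = π_P, the stationary distribution of P. -/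
/-!
Left and right eigenvectors of a matrix for different eigenvalues are orthogonal. For the
stochastic `2 × 2` matrix `P` this gives `π_P ⬝ ξ = 0`, and `(1, -1)` is a left eigenvector of `P`
for `s`. Hence an eigenvector `(x, w)` of `R` either has `w₀ = w₁` (eigenvalue `≠ s`), or
satisfies `P w = s w` and `p ⬝ w = 0`; a nonzero such `w` is orthogonal to both `p` and `π_P`,
which forces `p = π_P`. So if `p ⬝ ξ ≠ 0`, all eigenvectors of `R` lie in the plane `v₁ = v₂`.
If `p ⬝ ξ = 0`, then `e₀`, `(0, ξ)` and `𝟙` form an eigenbasis. Finally, `p` and `π_P` are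
probability vectors orthogonal to the same nonzero `ξ ∈ ℝ²`, so they coincide.
-/

open Matrix

def Matrix.HasEigenbasis {n K : Type*} [Fintype n] [Field K] (A : Matrix n n K) : Prop :=
  ∃ (v : n → n → K) (e : n → K), LinearIndependent K v ∧ ∀ i, A *ᵥ v i = e i • v i

theorem Matrix.dotProduct_eq_zero_of_vecMul_eq_smul_of_mulVec_eq_smul {n K : Type*} [Fintype n]
    [Field K] {P : Matrix n n K} {η w : n → K} {l m : K} (hη : η ᵥ* P = l • η)
    (hw : P *ᵥ w = m • w) (hlm : l ≠ m) : η ⬝ᵥ w = 0 := by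
  have h : (l - m) * (η ⬝ᵥ w) = 0 :=
    calc (l - m) * (η ⬝ᵥ w) = (l • η) ⬝ᵥ w - η ⬝ᵥ (m • w) := by
          rw [smul_dotProduct, dotProduct_smul, smul_eq_mul, smul_eq_mul, sub_mul]
      _ = 0 := by rw [← hη, ← hw, dotProduct_mulVec, sub_self]
  exact (mul_eq_zero.1 h).resolve_left (sub_ne_zero.2 hlm)

theorem Matrix.dotProduct_eq_zero_of_vecMul_eq_self_of_mulVec_eq_smul {n K : Type*} [Fintype n]
    [Field K] {P : Matrix n n K} {π w : n → K} {m : K} (hπ : π ᵥ* P = π)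
    (hw : P *ᵥ w = m • w) (hm : m ≠ 1) : π ⬝ᵥ w = 0 :=
  dotProduct_eq_zero_of_vecMul_eq_smul_of_mulVec_eq_smul (by rwa [one_smul]) hw hm.symm

theorem eq_of_dotProduct_eq_zero_of_sum_eq_one {x y u : Fin 2 → ℝ} (hu : u ≠ 0)
    (hx : x ⬝ᵥ u = 0) (hy : y ⬝ᵥ u = 0) (hxs : x 0 + x 1 = 1) (hys : y 0 + y 1 = 1) :
    x = y := by
  rw [vec2_dotProduct] at hx hy
  have hu01 : u 0 ≠ u 1 := by
    intro h
    apply hu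
    have h1 : u 1 = 0 := by linear_combination hx - u 1 * hxs - x 0 * h
    ext i; fin_cases i <;> simp [h, h1]
  have h0 : x 0 = y 0 := by
    have : (x 0 - y 0) * (u 0 - u 1) = 0 := by
      linear_combination hx - hy - u 1 * hxs + u 1 * hys
    linarith [(mul_eq_zero.1 this).resolve_right (sub_ne_zero.2 hu01)]
  ext i; fin_cases i
  · exact h0
  · simp only [Fin.mk_one]; linarith

section TwoByTwo

variable {P : Matrix (Fin 2) (Fin 2) ℝ} {ξ : Fin 2 → ℝ} {s : ℝ}

theorem apply_zero_ne_apply_one_of_mulVec_eq_smul (hP : P *ᵥ 1 = 1)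
    (hξ : P *ᵥ ξ = s • ξ) (hs : s ≠ 1) (hξ0 : ξ ≠ 0) : ξ 0 ≠ ξ 1 := by
  intro h
  have hconst : ξ = ξ 0 • 1 := by ext i; fin_cases i <;> simp [h]
  apply hξ0
  have : (s - 1) • ξ = 0 := by rw [sub_smul, ← hξ, one_smul, hconst, mulVec_smul, hP, sub_self]
  exact (smul_eq_zero.1 this).resolve_left (sub_ne_zero.2 hs)

theorem vecMul_one_neg_one_eq_smul (hP : P *ᵥ 1 = 1) :
    ![1, -1] ᵥ* P = (P 0 0 - P 1 0) • ![1, -1] := by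
  have h0 := congrFun hP 0
  have h1 := congrFun hP 1
  simp only [mulVec, dotProduct, Fin.sum_univ_two, Pi.one_apply, mul_one] at h0 h1
  ext j; fin_cases j <;> simp [vecMul, dotProduct, Fin.sum_univ_two] <;> linarith

theorem vecMul_one_neg_one_of_mulVec_eq_smul (hP : P *ᵥ 1 = 1)
    (hξ : P *ᵥ ξ = s • ξ) (hs : s ≠ 1) (hξ0 : ξ ≠ 0) : ![1, -1] ᵥ* P = s • ![1, -1] := by
  suffices P 0 0 - P 1 0 = s by rw [← this, vecMul_one_neg_one_eq_smul hP]
  by_contra hne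
  apply apply_zero_ne_apply_one_of_mulVec_eq_smul hP hξ hs hξ0
  have := dotProduct_eq_zero_of_vecMul_eq_smul_of_mulVec_eq_smul
    (vecMul_one_neg_one_eq_smul hP) hξ hne
  rw [vec2_dotProduct] at this
  norm_num at this
  linarith

end TwoByTwo

def blockUpper (s : ℝ) (p : Fin 2 → ℝ) (P : Matrix (Fin 2) (Fin 2) ℝ) :
    Matrix (Fin 3) (Fin 3) ℝ :=
  !![s, (1 - s) * p 0, (1 - s) * p 1;
     0, P 0 0, P 0 1;
     0, P 1 0, P 1 1]

section BlockUpper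

variable {s : ℝ} {p ξ π : Fin 2 → ℝ} {P : Matrix (Fin 2) (Fin 2) ℝ}

theorem blockUpper_mulVec_eq_smul_iff {e : ℝ} {v : Fin 3 → ℝ} :
    blockUpper s p P *ᵥ v = e • v ↔
      s * v 0 + (1 - s) * (p ⬝ᵥ Fin.tail v) = e * v 0 ∧ P *ᵥ Fin.tail v = e • Fin.tail v := by
  simp [blockUpper, funext_iff, Fin.forall_fin_succ, dotProduct, Fin.sum_univ_succ, Fin.tail,
    mul_add, mul_assoc]

theorem blockUpper_eigenvector_apply_one_eq_apply_two (hP : P *ᵥ 1 = 1)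
    (hξ : P *ᵥ ξ = s • ξ) (hs : s ≠ 1) (hξ0 : ξ ≠ 0) (hπ : π ᵥ* P = π) (hπs : π 0 + π 1 = 1)
    (hps : p 0 + p 1 = 1) (hpξ : p ⬝ᵥ ξ ≠ 0) {e : ℝ} {v : Fin 3 → ℝ}
    (hv : blockUpper s p P *ᵥ v = e • v) : v 1 = v 2 := by
  obtain ⟨hv0, hw⟩ := blockUpper_mulVec_eq_smul_iff.1 hv
  set w := Fin.tail v
  change w 0 = w 1
  by_cases hes : e = s
  · rw [hes] at hv0 hw
    suffices w = 0 by simp [this]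
    by_contra hw0
    have hpw : p ⬝ᵥ w = 0 :=
      (mul_eq_zero.1 (by linarith : (1 - s) * (p ⬝ᵥ w) = 0)).resolve_left (sub_ne_zero.2 hs.symm)
    have hpπ : p = π := eq_of_dotProduct_eq_zero_of_sum_eq_one hw0 hpw
      (dotProduct_eq_zero_of_vecMul_eq_self_of_mulVec_eq_smul hπ hw hs) hps hπs
    exact hpξ (hpπ ▸ dotProduct_eq_zero_of_vecMul_eq_self_of_mulVec_eq_smul hπ hξ hs)
  · have := dotProduct_eq_zero_of_vecMul_eq_smul_of_mulVec_eq_smul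
      (vecMul_one_neg_one_of_mulVec_eq_smul hP hξ hs hξ0) hw (Ne.symm hes)
    rw [vec2_dotProduct] at this
    norm_num at this
    linarith

theorem dotProduct_eq_zero_of_blockUpper_hasEigenbasis (hP : P *ᵥ 1 = 1)
    (hξ : P *ᵥ ξ = s • ξ) (hs : s ≠ 1) (hξ0 : ξ ≠ 0) (hπ : π ᵥ* P = π) (hπs : π 0 + π 1 = 1)
    (hps : p 0 + p 1 = 1) (hR : (blockUpper s p P).HasEigenbasis) : p ⬝ᵥ ξ = 0 := by
  by_contra hpξ
  obtain ⟨v, e, hli, hv⟩ := hR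
  have hdet : (Matrix.of v).det ≠ 0 :=
    ((isUnit_iff_isUnit_det _).1 (linearIndependent_rows_iff_isUnit.1 hli)).ne_zero
  refine hdet (exists_mulVec_eq_zero_iff.1 ⟨![0, 1, -1], by simp, ?_⟩)
  ext i
  have := blockUpper_eigenvector_apply_one_eq_apply_two hP hξ hs hξ0 hπ hπs hps hpξ (hv i)
  simp [mulVec, dotProduct, Fin.sum_univ_succ, this]

theorem blockUpper_hasEigenbasis_of_dotProduct_eq_zero (hP : P *ᵥ 1 = 1)
    (hξ : P *ᵥ ξ = s • ξ) (hξ01 : ξ 0 ≠ ξ 1) (hps : p 0 + p 1 = 1) (hpξ : p ⬝ᵥ ξ = 0) :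
    (blockUpper s p P).HasEigenbasis := by
  refine ⟨![![1, 0, 0], ![0, ξ 0, ξ 1], ![1, 1, 1]], ![s, s, 1], ?_, ?_⟩
  · refine linearIndependent_rows_iff_isUnit (A := !![1, 0, 0; 0, ξ 0, ξ 1; 1, 1, 1]) |>.2 ?_
    rw [isUnit_iff_isUnit_det, isUnit_iff_ne_zero, det_fin_three]
    simpa [sub_eq_zero] using hξ01
  · have htail : Fin.tail ![0, ξ 0, ξ 1] = ξ := by ext i; fin_cases i <;> rfl
    have htail' : Fin.tail ![(1 : ℝ), 1, 1] = 1 := by ext i; fin_cases i <;> rfl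
    intro i
    rw [blockUpper_mulVec_eq_smul_iff]
    fin_cases i
    · simp
    · simp [htail, hpξ, hξ]
    · simp [htail', hP, vec2_dotProduct, hps]

end BlockUpper

theorem stmt_13_general (s : ℝ) (p ξ πP : Fin 2 → ℝ) (P : Matrix (Fin 2) (Fin 2) ℝ)
    (hs1 : s < 1)
    (hpsum : p 0 + p 1 = 1)
    (hProw : ∀ i, ∑ j, P i j = 1)
    (hξ : P.mulVec ξ = s • ξ) (hξ0 : ξ ≠ 0)
    (hπ : Matrix.vecMul πP P = πP) (hπsum : πP 0 + πP 1 = 1)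
    (R : Matrix (Fin 3) (Fin 3) ℝ)
    (hR : R = !![s, (1 - s) * p 0, (1 - s) * p 1;
                 0, P 0 0, P 0 1;
                 0, P 1 0, P 1 1]) :
    ((∃ (v : Fin 3 → Fin 3 → ℝ) (e : Fin 3 → ℝ),
        LinearIndependent ℝ v ∧ ∀ i, R.mulVec (v i) = e i • v i) ↔
      p 0 * ξ 0 + p 1 * ξ 1 = 0) ∧
    (p 0 * ξ 0 + p 1 * ξ 1 = 0 → p = πP) := by
  change R = blockUpper s p P at hR
  subst hR
  rw [← vec2_dotProduct]
  have hP : P *ᵥ 1 = 1 := funext fun i => by simp [mulVec, dotProduct, hProw]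
  have hs : s ≠ 1 := hs1.ne
  refine ⟨⟨dotProduct_eq_zero_of_blockUpper_hasEigenbasis hP hξ hs hξ0 hπ hπsum hpsum,
      blockUpper_hasEigenbasis_of_dotProduct_eq_zero hP hξ
        (apply_zero_ne_apply_one_of_mulVec_eq_smul hP hξ hs hξ0) hpsum⟩,
    fun hpξ => eq_of_dotProduct_eq_zero_of_sum_eq_one hξ0 hpξ
      (dotProduct_eq_zero_of_vecMul_eq_self_of_mulVec_eq_smul hπ hξ hs) hpsum hπsum⟩

/-- For `R = [[s,(1-s)p],[0,P]]` with `λ = s` (i.e. `Pξ = sξ`): `R` is diagonalizable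
(has three linearly independent eigenvectors) if and only if `pξ = 0`, and in that
case `p = π_P`, the stationary distribution of `P`. -/
theorem stmt_13 (s : ℝ) (p ξ πP : Fin 2 → ℝ) (P : Matrix (Fin 2) (Fin 2) ℝ)
    (hs0 : 0 < s) (hs1 : s < 1)
    (hp : ∀ i, 0 ≤ p i) (hpsum : p 0 + p 1 = 1)
    (hPnn : ∀ i j, 0 ≤ P i j) (hProw : ∀ i, ∑ j, P i j = 1)
    (hirr : 0 < P 0 1 ∧ 0 < P 1 0)
    (hξ : P.mulVec ξ = s • ξ) (hξ0 : ξ ≠ 0)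
    (hπ : Matrix.vecMul πP P = πP) (hπnn : ∀ i, 0 ≤ πP i) (hπsum : πP 0 + πP 1 = 1)
    (R : Matrix (Fin 3) (Fin 3) ℝ)
    (hR : R = !![s, (1 - s) * p 0, (1 - s) * p 1;
                 0, P 0 0, P 0 1;
                 0, P 1 0, P 1 1]) :
    ((∃ (v : Fin 3 → Fin 3 → ℝ) (e : Fin 3 → ℝ),
        LinearIndependent ℝ v ∧ ∀ i, R.mulVec (v i) = e i • v i) ↔
      p 0 * ξ 0 + p 1 * ξ 1 = 0) ∧
    (p 0 * ξ 0 + p 1 * ξ 1 = 0 → p = πP) :=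
  stmt_13_general s p ξ πP P hs1 hpsum hProw hξ hξ0 hπ hπsum R hR
end
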